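/- Let α, β ∈ (0,1), v ∈ C^α and w ∈ C^β. Then the symmetric part S(v,w) := Σ_{m,n≤1} v_{0m} w_{0n} ∫_0^· φ_{0m} dφ_{0n} + (1/2) Σ_{p≥1} Δ_p v Δ_p w defines a bounded bilinear operator from C^α × C^β to C^{α+β}, i.e. ‖S(v,w)‖_{α+β} ≲ ‖v‖_α ‖w‖_β, without any restriction on α + β. -/

import Mathlib

/-!
Away from generation `0`, `S(v,w) = ½ ∑_{q ≥ 1} Δ_q v Δ_q w`. Only one tent of a generation
`q ≥ 1` is nonzero at a point, so `‖Δ_q v Δ_q w‖_∞ ≲ 2^(-q(α+β))`, and the Schauder coefficient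
of generation `p` (a second difference over a dyadic cell of length `2^(-p)`) is of the same size:
this is summable over `q ≥ p`. For `q < p`, both blocks are affine on the cells of generation `p`,
so that second difference is `-½` times the product of the increments of the two blocks over the
cell, which is `≲ 2^(q(2-α-β)) 4^(-p)`; since `α + β < 2` these sum over `q < p` to
`≲ 2^(-p(α+β))`. The generation-`0` term is a primitive of a function that is Lipschitz on each
cell, so its coefficients are `O(4^(-p))`.
-/

noncomputable section
open MeasureTheory Set

namespace Sch

/-- dyadic point `t⁰_{pm} = (m-1)/2^p`. -/
def pt0 (p m : ℕ) : ℝ := ((m : ℝ) - 1) / 2 ^ p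
/-- dyadic point `t¹_{pm} = (2m-1)/2^{p+1}`. -/
def pt1 (p m : ℕ) : ℝ := (2 * (m : ℝ) - 1) / 2 ^ (p + 1)
/-- dyadic point `t²_{pm} = m/2^p`. -/
def pt2 (p m : ℕ) : ℝ := (m : ℝ) / 2 ^ p

/-- The rescaled Haar function `χ_{pm} = 2^{p/2} H_{pm}`, with the conventions
`χ_{00} = 1` on `[0,1)` (derivative of `φ_{00}(t) = t`) and `χ_{p0} ≡ 0` for `p ≥ 1`. -/
def chi (p m : ℕ) (t : ℝ) : ℝ :=
  if m = 0 then (if p = 0 ∧ 0 ≤ t ∧ t < 1 then 1 else 0)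
  else if pt0 p m ≤ t ∧ t < pt1 p m then (2 : ℝ) ^ p
  else if pt1 p m ≤ t ∧ t < pt2 p m then -(2 : ℝ) ^ p
  else 0

/-- The rescaled Schauder tent function `φ_{pm} = 2^{p/2} G_{pm} = ∫_0^· χ_{pm}`. -/
def phi (p m : ℕ) (t : ℝ) : ℝ := ∫ s in (0:ℝ)..t, chi p m s

variable {E F G : Type*} [NormedAddCommGroup E] [NormedSpace ℝ E]
  [NormedAddCommGroup F] [NormedSpace ℝ F] [NormedAddCommGroup G] [NormedSpace ℝ G]

/-- The (rescaled) Schauder coefficient `f_{pm} = 2f(t¹_{pm}) - f(t⁰_{pm}) - f(t²_{pm})`,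
with the conventions `f_{00} = f(1) - f(0)` and `f_{p0} = 0` for `p ≥ 1`. -/
def coeff (f : ℝ → E) (p m : ℕ) : E :=
  if m = 0 then (if p = 0 then f 1 - f 0 else 0)
  else f (pt1 p m) + f (pt1 p m) - f (pt0 p m) - f (pt2 p m)

/-- Shifted Schauder blocks: `block f 0 = Δ_{-1} f ≡ f(0)` and `block f (p+1) = Δ_p f`. -/
def block (f : ℝ → E) : ℕ → ℝ → E
  | 0 => fun _ => f 0
  | (p + 1) => fun t => ∑ m ∈ Finset.range (2 ^ p + 1), phi p m t • coeff f p m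

/-- Partial sum `psum f p = S_{p-1} f` (blocks of generations `-1, 0, …, p-1`),
the piecewise linear interpolation of `f` on the dyadic grid of generation `p`. -/
def psum (f : ℝ → E) (p : ℕ) (t : ℝ) : E := ∑ k ∈ Finset.range (p + 1), block f k t

/-- Derivative of the shifted Schauder block. -/
def dblock (f : ℝ → E) : ℕ → ℝ → E
  | 0 => fun _ => 0
  | (p + 1) => fun t => ∑ m ∈ Finset.range (2 ^ p + 1), chi p m t • coeff f p m

/-- Derivative of `psum f p = S_{p-1} f`. -/
def dpsum (f : ℝ → E) (p : ℕ) (t : ℝ) : E := ∑ k ∈ Finset.range (p + 1), dblock f k t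

/-- `CoeffBound γ f K` expresses `‖f‖_γ = sup_{p,m} 2^{pγ} |f_{pm}| ≤ K`
(including the generation-(-1) coefficient `f_{-1,0} = f(0)`). -/
def CoeffBound (γ : ℝ) (f : ℝ → E) (K : ℝ) : Prop :=
  (2 : ℝ) ^ (-γ) * ‖f 0‖ ≤ K ∧
  ∀ p m : ℕ, m ≤ 2 ^ p → (2 : ℝ) ^ (γ * (p : ℝ)) * ‖coeff f p m‖ ≤ K

/-- The Schauder paraproduct `π_<(v,w) = ∑_{p≥0} S_{p-1}v · Δ_p w`. -/
def para (v : ℝ → (E →L[ℝ] F)) (w : ℝ → E) (t : ℝ) : F :=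
  ∑' p : ℕ, (psum v p t) (block w (p + 1) t)

/-- The `p`-th term of the Lévy area: `∫_0^t Δ_p v dS_{p-1}w - ∫_0^t d(S_{p-1}v) Δ_p w`. -/
def leviTerm (v : ℝ → (E →L[ℝ] F)) (w : ℝ → E) (p : ℕ) (t : ℝ) : F :=
  ∫ s in (0:ℝ)..t, ((block v (p + 1) s) (dpsum w p s) - (dpsum v p s) (block w (p + 1) s))

/-- The Lévy area `L(v,w) = ∑_p (∫ Δ_p v dS_{p-1}w - ∫ d(S_{p-1}v) Δ_p w)`. -/
def levi (v : ℝ → (E →L[ℝ] F)) (w : ℝ → E) (t : ℝ) : F := ∑' p : ℕ, leviTerm v w p t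

/-- The symmetric part
`S(v,w) = ∑_{m,n≤1} v_{0m}w_{0n} ∫_0^· φ_{0m} dφ_{0n} + (1/2) ∑_{p≥1} Δ_p v Δ_p w`. -/
def symPart (v : ℝ → (E →L[ℝ] F)) (w : ℝ → E) (t : ℝ) : F :=
  (∑ m ∈ Finset.range 2, ∑ n ∈ Finset.range 2,
      (∫ s in (0:ℝ)..t, phi 0 m s * chi 0 n s) • ((coeff v 0 m) (coeff w 0 n)))
    + (1 / 2 : ℝ) • ∑' p : ℕ, (block v (p + 2) t) (block w (p + 2) t)

/-- The Young integral `I(v, dw) = L(v,w) + S(v,w) + π_<(v,w)`. -/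
def young (v : ℝ → (E →L[ℝ] F)) (w : ℝ → E) (t : ℝ) : F :=
  levi v w t + symPart v w t + para v w t

end Sch

namespace Sch

open intervalIntegral

section DyadicPoints

lemma pt1_sub_pt0 (p m : ℕ) : pt1 p m - pt0 p m = 1 / 2 ^ (p + 1) := by
  unfold pt1 pt0; rw [pow_succ]; field_simp; ring

lemma pt2_sub_pt1 (p m : ℕ) : pt2 p m - pt1 p m = 1 / 2 ^ (p + 1) := by
  unfold pt2 pt1; rw [pow_succ]; field_simp; ring

lemma pt0_lt_pt1 (p m : ℕ) : pt0 p m < pt1 p m := by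
  have := pt1_sub_pt0 p m; have : (0:ℝ) < 1 / 2 ^ (p + 1) := by positivity
  linarith

lemma pt1_lt_pt2 (p m : ℕ) : pt1 p m < pt2 p m := by
  have := pt2_sub_pt1 p m; have : (0:ℝ) < 1 / 2 ^ (p + 1) := by positivity
  linarith

lemma pt0_lt_pt2 (p m : ℕ) : pt0 p m < pt2 p m := (pt0_lt_pt1 p m).trans (pt1_lt_pt2 p m)

lemma pt2_sub_pt0 (p m : ℕ) : pt2 p m - pt0 p m = 1 / 2 ^ p := by
  unfold pt2 pt0; field_simp; ring

lemma pt0_nonneg {p m : ℕ} (hm : m ≠ 0) : 0 ≤ pt0 p m := by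
  have : (1:ℝ) ≤ m := by exact_mod_cast Nat.one_le_iff_ne_zero.mpr hm
  unfold pt0; exact div_nonneg (by linarith) (by positivity)

lemma pt2_le_one {p m : ℕ} (hm : m ≤ 2 ^ p) : pt2 p m ≤ 1 := by
  unfold pt2; rw [div_le_one (by positivity)]; exact_mod_cast hm

lemma floor_mul_two_pow_eq {p m : ℕ} {t : ℝ} (ht : t ∈ Ico (pt0 p m) (pt2 p m)) :
    ⌊t * 2 ^ p⌋ = (m : ℤ) - 1 := by
  have h2 : (0:ℝ) < 2 ^ p := by positivity
  obtain ⟨h0, h1⟩ := ht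
  rw [pt0, div_le_iff₀ h2] at h0
  rw [pt2, lt_div_iff₀ h2] at h1
  rw [Int.floor_eq_iff]; push_cast; constructor <;> linarith

lemma le_iff_le_of_floor_eq {P : ℕ} {x s t : ℝ} (hx : ∃ j : ℤ, x * 2 ^ P = j)
    (h : ⌊s * 2 ^ P⌋ = ⌊t * 2 ^ P⌋) : x ≤ s ↔ x ≤ t := by
  obtain ⟨j, hj⟩ := hx
  have h2 : (0:ℝ) < 2 ^ P := by positivity
  rw [← mul_le_mul_iff_left₀ h2, ← mul_le_mul_iff_left₀ h2 (b := x), hj, ← Int.le_floor,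
    ← Int.le_floor, h]

lemma div_two_pow_mul_two_pow {q P : ℕ} (h : q ≤ P) (x : ℝ) :
    x / 2 ^ q * 2 ^ P = x * 2 ^ (P - q) := by
  rw [← Nat.add_sub_cancel' h, pow_add, Nat.add_sub_cancel_left]; field_simp

end DyadicPoints

section Haar

lemma abs_chi_le (p m : ℕ) (t : ℝ) : |chi p m t| ≤ 2 ^ p := by
  have : (1:ℝ) ≤ 2 ^ p := one_le_pow₀ (by norm_num)
  unfold chi; split_ifs <;> simp [abs_of_nonneg]; linarith

lemma measurable_chi (p m : ℕ) : Measurable (chi p m) := by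
  unfold chi
  repeat' apply Measurable.ite
  all_goals first | exact measurable_const | measurability

lemma intervalIntegrable_chi (p m : ℕ) (a b : ℝ) : IntervalIntegrable (chi p m) volume a b := by
  refine (intervalIntegrable_const (c := (2:ℝ) ^ p)).mono_fun
    (measurable_chi p m).aestronglyMeasurable (ae_of_all _ fun t => ?_)
  simpa [abs_of_pos (by positivity : (0:ℝ) < 2 ^ p)] using abs_chi_le p m t

lemma chi_of_mem_Ico_pt0_pt1 {p m : ℕ} (hm : m ≠ 0) {t : ℝ} (ht : t ∈ Ico (pt0 p m) (pt1 p m)) :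
    chi p m t = 2 ^ p := by
  simp [chi, hm, ht.1, ht.2]

lemma chi_of_mem_Ico_pt1_pt2 {p m : ℕ} (hm : m ≠ 0) {t : ℝ} (ht : t ∈ Ico (pt1 p m) (pt2 p m)) :
    chi p m t = -2 ^ p := by
  simp [chi, hm, ht.1, ht.2, not_lt.2 ht.1]

lemma chi_eq_zero_of_notMem {p m : ℕ} (hm : m ≠ 0) {t : ℝ} (ht : t ∉ Ico (pt0 p m) (pt2 p m)) :
    chi p m t = 0 := by
  have := pt0_lt_pt1 p m; have := pt1_lt_pt2 p m
  simp only [mem_Ico, not_and_or, not_le, not_lt] at ht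
  simp only [chi, hm, if_false]
  split_ifs <;> rcases ht with ht | ht <;> linarith

lemma chi_eq_of_floor_eq {q n P : ℕ} (hqP : q + 1 ≤ P) {s t : ℝ}
    (h : ⌊s * 2 ^ P⌋ = ⌊t * 2 ^ P⌋) : chi q n s = chi q n t := by
  have key : ∀ x : ℝ, (∃ j : ℤ, x * 2 ^ P = j) → (x ≤ s ↔ x ≤ t) ∧ (s < x ↔ t < x) :=
    fun x hx => ⟨le_iff_le_of_floor_eq hx h, by simpa only [not_le] using
      (le_iff_le_of_floor_eq hx h).not⟩
  obtain ⟨h0, -⟩ := key 0 ⟨0, by simp⟩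
  obtain ⟨-, h1⟩ := key 1 ⟨2 ^ P, by simp⟩
  obtain ⟨hpt0, -⟩ := key (pt0 q n) ⟨((n:ℤ) - 1) * 2 ^ (P - q), by
    rw [pt0, div_two_pow_mul_two_pow (by omega)]; push_cast; ring⟩
  obtain ⟨hpt1, hpt1'⟩ := key (pt1 q n) ⟨(2 * (n:ℤ) - 1) * 2 ^ (P - (q + 1)), by
    rw [pt1, div_two_pow_mul_two_pow hqP]; push_cast; ring⟩
  obtain ⟨-, hpt2⟩ := key (pt2 q n) ⟨(n:ℤ) * 2 ^ (P - q), by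
    rw [pt2, div_two_pow_mul_two_pow (by omega)]; push_cast; ring⟩
  simp only [chi, h0, h1, hpt0, hpt1, hpt1', hpt2]

lemma chi_eq_chi_pt0 {q n p m : ℕ} (hqp : q + 1 ≤ p) {s : ℝ} (hs : s ∈ Ico (pt0 p m) (pt2 p m)) :
    chi q n s = chi q n (pt0 p m) :=
  chi_eq_of_floor_eq hqp <| by
    rw [floor_mul_two_pow_eq hs, floor_mul_two_pow_eq ⟨le_rfl, pt0_lt_pt2 p m⟩]

end Haar

section Tent

lemma integral_eq_of_eqOn_Ico {f : ℝ → ℝ} {a b c : ℝ} (hab : a ≤ b)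
    (h : EqOn f (fun _ => c) (Ico a b)) : ∫ s in a..b, f s = c * (b - a) := by
  rw [integral_congr_Ioo_of_le hab (h.mono Ioo_subset_Ico_self), intervalIntegral.integral_const,
    smul_eq_mul, mul_comm]

lemma phi_sub_phi (p m : ℕ) (a b : ℝ) : phi p m b - phi p m a = ∫ s in a..b, chi p m s :=
  integral_interval_sub_left (intervalIntegrable_chi p m 0 b) (intervalIntegrable_chi p m 0 a)

lemma abs_phi_sub_le (p m : ℕ) (a b : ℝ) : |phi p m b - phi p m a| ≤ 2 ^ p * |b - a| := by
  rw [phi_sub_phi, ← Real.norm_eq_abs]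
  exact norm_integral_le_of_norm_le_const fun t _ => abs_chi_le p m t

lemma continuous_phi (p m : ℕ) : Continuous (phi p m) :=
  continuous_primitive (intervalIntegrable_chi p m) 0

lemma phi_zero (p m : ℕ) : phi p m 0 = 0 := integral_same

lemma phi_eq_zero_of_le_pt0 {p m : ℕ} (hm : m ≠ 0) {t : ℝ} (ht : t ≤ pt0 p m) : phi p m t = 0 := by
  have hz : EqOn (chi p m) 0 (uIoo 0 t) := fun s hs =>
    chi_eq_zero_of_notMem hm fun h => (lt_max_iff.1 hs.2).elim
      (fun h' => (h'.trans_le (pt0_nonneg hm)).not_ge h.1) (fun h' => (h'.trans_le ht).not_ge h.1)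
  rw [phi, integral_congr_uIoo hz]; simp

lemma phi_pt2 {p m : ℕ} (hm : m ≠ 0) : phi p m (pt2 p m) = 0 := by
  have h01 : phi p m (pt1 p m) - phi p m (pt0 p m) = 2 ^ p * (pt1 p m - pt0 p m) := by
    rw [phi_sub_phi]
    exact integral_eq_of_eqOn_Ico (pt0_lt_pt1 p m).le fun s hs => chi_of_mem_Ico_pt0_pt1 hm hs
  have h12 : phi p m (pt2 p m) - phi p m (pt1 p m) = -2 ^ p * (pt2 p m - pt1 p m) := by
    rw [phi_sub_phi]
    exact integral_eq_of_eqOn_Ico (pt1_lt_pt2 p m).le fun s hs => chi_of_mem_Ico_pt1_pt2 hm hs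
  rw [phi_eq_zero_of_le_pt0 hm le_rfl, pt1_sub_pt0] at h01
  rw [pt2_sub_pt1] at h12
  linarith

lemma phi_eq_zero_of_pt2_le {p m : ℕ} (hm : m ≠ 0) {t : ℝ} (ht : pt2 p m ≤ t) : phi p m t = 0 := by
  have h := phi_sub_phi p m (pt2 p m) t
  rw [integral_eq_of_eqOn_Ico ht fun s hs => chi_eq_zero_of_notMem hm fun h => hs.1.not_gt h.2,
    phi_pt2 hm] at h
  linarith

lemma abs_phi_le_half {p m : ℕ} (hm : m ≠ 0) (t : ℝ) : |phi p m t| ≤ 1 / 2 := by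
  rcases le_or_gt t (pt0 p m) with h0 | h0
  · simp [phi_eq_zero_of_le_pt0 hm h0]
  rcases le_or_gt (pt2 p m) t with h2 | h2
  · simp [phi_eq_zero_of_pt2_le hm h2]
  -- `phi` rises from `0` at `pt0` and returns to `0` at `pt2` with slope at most `2 ^ p`
  have hl := abs_phi_sub_le p m (pt0 p m) t
  have hr := abs_phi_sub_le p m (pt2 p m) t
  rw [phi_eq_zero_of_le_pt0 hm le_rfl, sub_zero, abs_of_pos (sub_pos.2 h0)] at hl
  rw [phi_pt2 hm, sub_zero, abs_of_neg (sub_neg.2 h2)] at hr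
  have : (2:ℝ) ^ p * (pt2 p m - pt0 p m) = 1 := by
    rw [pt2_sub_pt0]; field_simp
  linarith

lemma phi_succ_zero (q : ℕ) : phi (q + 1) 0 = 0 := by
  ext t; simp [phi, chi]

lemma abs_phi_succ_le_half (q n : ℕ) (t : ℝ) : |phi (q + 1) n t| ≤ 1 / 2 := by
  rcases eq_or_ne n 0 with rfl | hn
  · simp [phi_succ_zero]
  · exact abs_phi_le_half hn t

lemma cast_eq_floor_add_one_of_chi_ne_zero {q n : ℕ} {t : ℝ} (h : chi (q + 1) n t ≠ 0) :
    (n : ℤ) = ⌊t * 2 ^ (q + 1)⌋ + 1 := by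
  rcases eq_or_ne n 0 with rfl | hn
  · simp [chi] at h
  by_contra hne
  refine h (chi_eq_zero_of_notMem hn fun ht => hne ?_)
  rw [floor_mul_two_pow_eq ht]; ring

lemma cast_eq_floor_add_one_of_phi_ne_zero {q n : ℕ} {t : ℝ} (h : phi (q + 1) n t ≠ 0) :
    (n : ℤ) = ⌊t * 2 ^ (q + 1)⌋ + 1 := by
  rcases eq_or_ne n 0 with rfl | hn
  · simp [phi_succ_zero] at h
  have h0 : pt0 (q + 1) n < t := lt_of_not_ge fun ht => h (phi_eq_zero_of_le_pt0 hn ht)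
  have h2 : t < pt2 (q + 1) n := lt_of_not_ge fun ht => h (phi_eq_zero_of_pt2_le hn ht)
  rw [floor_mul_two_pow_eq ⟨h0.le, h2⟩]; ring

lemma phi_sub_phi_pt0 {q n p m : ℕ} (hqp : q + 1 ≤ p) {s : ℝ} (hs : s ∈ Icc (pt0 p m) (pt2 p m)) :
    phi q n s - phi q n (pt0 p m) = chi q n (pt0 p m) * (s - pt0 p m) := by
  rw [phi_sub_phi]
  exact integral_eq_of_eqOn_Ico hs.1 fun u hu => chi_eq_chi_pt0 hqp ⟨hu.1, hu.2.trans_le hs.2⟩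

lemma phi_pt1 {q n p m : ℕ} (hqp : q + 1 ≤ p) :
    phi q n (pt1 p m) = 2⁻¹ * (phi q n (pt0 p m) + phi q n (pt2 p m)) := by
  have h1 := phi_sub_phi_pt0 (n := n) hqp ⟨(pt0_lt_pt1 p m).le, (pt1_lt_pt2 p m).le⟩
  have h2 := phi_sub_phi_pt0 (n := n) hqp ⟨(pt0_lt_pt2 p m).le, le_rfl (a := pt2 p m)⟩
  have := pt1_sub_pt0 p m; have := pt2_sub_pt1 p m
  have : pt2 p m - pt0 p m = 2 * (pt1 p m - pt0 p m) := by linarith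
  rw [this] at h2
  linarith

end Tent

section Coefficients

variable {E F : Type*} [NormedAddCommGroup E] [NormedAddCommGroup F]

lemma coeff_of_ne_zero (f : ℝ → E) (p : ℕ) {m : ℕ} (hm : m ≠ 0) :
    coeff f p m = f (pt1 p m) + f (pt1 p m) - f (pt0 p m) - f (pt2 p m) := by
  simp [coeff, hm]

lemma coeff_add_smul [NormedSpace ℝ E] (f g : ℝ → E) (c : ℝ) (p m : ℕ) :
    coeff (fun t => f t + c • g t) p m = coeff f p m + c • coeff g p m := by
  unfold coeff; split_ifs <;> module

lemma coeff_smul_const [NormedSpace ℝ E] (a : ℝ → ℝ) (x : E) (p m : ℕ) :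
    coeff (fun t => a t • x) p m = coeff a p m • x := by
  unfold coeff; split_ifs <;> module

lemma coeff_sum {ι : Type*} (s : Finset ι) (f : ι → ℝ → E) (p m : ℕ) :
    coeff (fun t => ∑ i ∈ s, f i t) p m = ∑ i ∈ s, coeff (f i) p m := by
  unfold coeff; split_ifs <;> simp [Finset.sum_add_distrib, Finset.sum_sub_distrib]

lemma coeff_tsum {f : ℕ → ℝ → E} (hf : ∀ t, Summable fun i => f i t) (p m : ℕ) :
    coeff (fun t => ∑' i, f i t) p m = ∑' i, coeff (f i) p m := by
  unfold coeff
  split_ifs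
  · exact ((hf 1).tsum_sub (hf 0)).symm
  · simp
  · rw [← (hf _).tsum_add (hf _), ← ((hf _).add (hf _)).tsum_sub (hf _),
      ← (((hf _).add (hf _)).sub (hf _)).tsum_sub (hf _)]

lemma norm_coeff_le_of_norm_le {f : ℝ → E} {B : ℝ} (hB : ∀ t ∈ Icc (0:ℝ) 1, ‖f t‖ ≤ B)
    {p m : ℕ} (hmp : m ≤ 2 ^ p) : ‖coeff f p m‖ ≤ 4 * B := by
  have hB0 : 0 ≤ B := (norm_nonneg _).trans (hB 0 ⟨le_rfl, zero_le_one⟩)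
  rcases eq_or_ne m 0 with rfl | hm
  · simp only [coeff, if_true]
    split_ifs
    · linarith [norm_sub_le (f 1) (f 0), hB 1 ⟨zero_le_one, le_rfl⟩, hB 0 ⟨le_rfl, zero_le_one⟩]
    · simpa using hB0
  have h0 := pt0_nonneg (p := p) hm
  have h2 := pt2_le_one hmp
  have := pt0_lt_pt1 p m; have := pt1_lt_pt2 p m
  rw [coeff_of_ne_zero f p hm]
  have b0 := hB (pt0 p m) ⟨h0, by linarith⟩
  have b1 := hB (pt1 p m) ⟨by linarith, by linarith⟩
  have b2 := hB (pt2 p m) ⟨by linarith, h2⟩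
  linarith [norm_sub_le (f (pt1 p m) + f (pt1 p m) - f (pt0 p m)) (f (pt2 p m)),
    norm_sub_le (f (pt1 p m) + f (pt1 p m)) (f (pt0 p m)), norm_add_le (f (pt1 p m)) (f (pt1 p m))]

lemma coeff_apply_of_midpoint [NormedSpace ℝ E] [NormedSpace ℝ F] {f : ℝ → E →L[ℝ] F} {g : ℝ → E}
    {p m : ℕ} (hm : m ≠ 0)
    (hf : f (pt1 p m) = (2⁻¹ : ℝ) • (f (pt0 p m) + f (pt2 p m)))
    (hg : g (pt1 p m) = (2⁻¹ : ℝ) • (g (pt0 p m) + g (pt2 p m))) :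
    coeff (fun t => f t (g t)) p m
      = -(2⁻¹ : ℝ) • (f (pt2 p m) - f (pt0 p m)) (g (pt2 p m) - g (pt0 p m)) := by
  rw [coeff_of_ne_zero _ p hm, hf, hg]
  simp only [smul_apply, add_apply, sub_apply, map_add, map_smul, map_sub]
  module

end Coefficients

lemma intervalIntegrable_phi_mul_chi (q i q' j : ℕ) (a b : ℝ) :
    IntervalIntegrable (fun s => phi q i s * chi q' j s) volume a b :=
  (intervalIntegrable_chi q' j a b).continuousOn_mul (continuous_phi q i).continuousOn

lemma abs_coeff_primitive_phi_mul_chi_le {q q' i j p m : ℕ} (hqp : q' + 1 ≤ p) (hm : m ≠ 0) :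
    |coeff (fun t => ∫ s in (0:ℝ)..t, phi q i s * chi q' j s) p m|
      ≤ 2 ^ q * 2 ^ q' * (1 / 2 ^ (p + 1)) ^ 2 := by
  set F := fun s => phi q i s * chi q' j s
  set δ : ℝ := 1 / 2 ^ (p + 1)
  have hδ : 0 < δ := by positivity
  have hF : ∀ a b, IntervalIntegrable F volume a b := intervalIntegrable_phi_mul_chi q i q' j
  have hF' : ∀ a b, IntervalIntegrable (fun s => F (s + δ)) volume a b := fun a b => by
    simpa using (hF (a + δ) (b + δ)).comp_add_right δ
  have e1 : pt1 p m = pt0 p m + δ := by linarith [pt1_sub_pt0 p m]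
  have e2 : pt2 p m = pt1 p m + δ := by linarith [pt2_sub_pt1 p m]
  -- the second difference compares `F` on the two halves of the cell
  have hcoeff : coeff (fun t => ∫ s in (0:ℝ)..t, F s) p m
      = ∫ s in pt0 p m..pt1 p m, (F s - F (s + δ)) := by
    rw [coeff_of_ne_zero _ p hm, integral_sub (hF _ _) (hF' _ _),
      integral_comp_add_right, ← e1, ← e2,
      ← integral_interval_sub_left (hF 0 (pt1 p m)) (hF 0 (pt0 p m)),
      ← integral_interval_sub_left (hF 0 (pt2 p m)) (hF 0 (pt1 p m))]
    abel
  have hcell : EqOn (fun s => F s - F (s + δ))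
      (fun s => (phi q i s - phi q i (s + δ)) * chi q' j (pt0 p m)) (Ioo (pt0 p m) (pt1 p m)) := by
    intro s hs
    have h1 : s ∈ Ico (pt0 p m) (pt2 p m) := ⟨hs.1.le, hs.2.trans (pt1_lt_pt2 p m)⟩
    have h2 : s + δ ∈ Ico (pt0 p m) (pt2 p m) := ⟨by linarith [hs.1], by linarith [hs.2]⟩
    simp only [F, chi_eq_chi_pt0 hqp h1, chi_eq_chi_pt0 hqp h2]
    ring
  rw [hcoeff, integral_congr_Ioo_of_le (pt0_lt_pt1 p m).le hcell, ← Real.norm_eq_abs]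
  refine (intervalIntegral.norm_integral_le_of_norm_le_const (C := 2 ^ q * δ * 2 ^ q')
    fun s _ => ?_).trans ?_
  · rw [Real.norm_eq_abs, abs_mul]
    refine mul_le_mul ?_ (abs_chi_le _ _ _) (abs_nonneg _) (by positivity)
    simpa [abs_sub_comm, abs_of_pos hδ] using abs_phi_sub_le q i s (s + δ)
  · rw [e1, add_sub_cancel_left, abs_of_pos hδ]
    exact le_of_eq (by ring)

section Blocks

variable {E : Type*} [NormedAddCommGroup E] [NormedSpace ℝ E]

lemma norm_sum_le_of_unique_ne_zero {G ι : Type*} [SeminormedAddCommGroup G] {s : Finset ι}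
    {f : ι → G} {B : ℝ} (hB0 : 0 ≤ B)
    (huniq : ∀ i ∈ s, ∀ j ∈ s, f i ≠ 0 → f j ≠ 0 → i = j) (hB : ∀ i ∈ s, ‖f i‖ ≤ B) :
    ‖∑ i ∈ s, f i‖ ≤ B := by
  by_cases h : ∃ i ∈ s, f i ≠ 0
  · obtain ⟨i, hi, hfi⟩ := h
    rw [Finset.sum_eq_single_of_mem i hi fun j hj hji =>
      by_contra fun hfj => hji (huniq j hj i hi hfj hfi)]
    exact hB i hi
  · simp only [not_exists, not_and, not_not] at h
    rwa [Finset.sum_eq_zero h, norm_zero]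

lemma block_succ (f : ℝ → E) (q : ℕ) (t : ℝ) :
    block f (q + 1) t = ∑ n ∈ Finset.range (2 ^ q + 1), phi q n t • coeff f q n := rfl

lemma continuous_block (f : ℝ → E) : ∀ k, Continuous (block f k)
  | 0 => continuous_const
  | q + 1 => continuous_finsetSum _ fun n _ => (continuous_phi q n).smul continuous_const

lemma block_succ_zero (f : ℝ → E) (q : ℕ) : block f (q + 1) 0 = 0 := by
  simp [block_succ, phi_zero]

lemma norm_block_le {f : ℝ → E} {q : ℕ} {M : ℝ}
    (hM : ∀ n ≤ 2 ^ (q + 1), ‖coeff f (q + 1) n‖ ≤ M) (t : ℝ) :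
    ‖block f (q + 2) t‖ ≤ M / 2 := by
  have hM0 : 0 ≤ M := (norm_nonneg _).trans (hM 0 (Nat.zero_le _))
  refine norm_sum_le_of_unique_ne_zero (by positivity) (fun i _ j _ hi hj => ?_) fun n hn => ?_
  · exact_mod_cast (cast_eq_floor_add_one_of_phi_ne_zero (left_ne_zero_of_smul hi)).trans
      (cast_eq_floor_add_one_of_phi_ne_zero (left_ne_zero_of_smul hj)).symm
  · rw [norm_smul, Real.norm_eq_abs]
    calc _ ≤ 1 / 2 * M := mul_le_mul (abs_phi_succ_le_half _ _ _)
            (hM n (Nat.lt_succ_iff.1 (Finset.mem_range.1 hn))) (norm_nonneg _) (by norm_num)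
      _ = M / 2 := by ring

lemma block_pt1 (f : ℝ → E) {q p : ℕ} (hqp : q + 1 ≤ p) (m : ℕ) :
    block f (q + 1) (pt1 p m)
      = (2⁻¹ : ℝ) • (block f (q + 1) (pt0 p m) + block f (q + 1) (pt2 p m)) := by
  simp only [block_succ, ← Finset.sum_add_distrib, Finset.smul_sum, ← add_smul, smul_smul,
    phi_pt1 hqp]

lemma block_pt2_sub_block_pt0 (f : ℝ → E) {q p : ℕ} (hqp : q + 1 ≤ p) (m : ℕ) :
    block f (q + 1) (pt2 p m) - block f (q + 1) (pt0 p m)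
      = ∑ n ∈ Finset.range (2 ^ q + 1), (chi q n (pt0 p m) / 2 ^ p) • coeff f q n := by
  rw [block_succ, block_succ, ← Finset.sum_sub_distrib]
  refine Finset.sum_congr rfl fun n _ => ?_
  rw [← sub_smul, phi_sub_phi_pt0 hqp ⟨(pt0_lt_pt2 p m).le, le_rfl⟩, pt2_sub_pt0, mul_one_div]

lemma norm_block_pt2_sub_block_pt0_le {f : ℝ → E} {q p : ℕ} {M : ℝ} (hqp : q + 2 ≤ p)
    (hM : ∀ n ≤ 2 ^ (q + 1), ‖coeff f (q + 1) n‖ ≤ M) (m : ℕ) :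
    ‖block f (q + 2) (pt2 p m) - block f (q + 2) (pt0 p m)‖ ≤ 2 ^ (q + 1) / 2 ^ p * M := by
  have hM0 : 0 ≤ M := (norm_nonneg _).trans (hM 0 (Nat.zero_le _))
  rw [block_pt2_sub_block_pt0 f (by omega)]
  refine norm_sum_le_of_unique_ne_zero (by positivity) (fun i _ j _ hi hj => ?_) fun n hn => ?_
  · have hi' := (div_ne_zero_iff.1 (left_ne_zero_of_smul hi)).1
    have hj' := (div_ne_zero_iff.1 (left_ne_zero_of_smul hj)).1
    exact_mod_cast (cast_eq_floor_add_one_of_chi_ne_zero hi').trans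
      (cast_eq_floor_add_one_of_chi_ne_zero hj').symm
  · rw [norm_smul, Real.norm_eq_abs, abs_div, abs_of_pos (by positivity : (0:ℝ) < 2 ^ p)]
    exact mul_le_mul (div_le_div_of_nonneg_right (abs_chi_le _ _ _) (by positivity))
      (hM n (Nat.lt_succ_iff.1 (Finset.mem_range.1 hn))) (norm_nonneg _) (by positivity)

end Blocks

section GeometricSums

lemma summable_pow_succ_mul {ρ : ℝ} (h0 : 0 ≤ ρ) (h1 : ρ < 1) (c : ℝ) :
    Summable fun q : ℕ => ρ ^ (q + 1) * c :=
  (summable_nat_add_iff 1).2 ((summable_geometric_of_lt_one h0 h1).mul_right c)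

lemma sum_range_pow_succ_le {x : ℝ} (hx : 1 < x) (k : ℕ) :
    ∑ q ∈ Finset.range k, x ^ (q + 1) ≤ x ^ (k + 1) / (x - 1) := by
  have hx1 : 0 < x - 1 := by linarith
  simp_rw [pow_succ, ← Finset.sum_mul, geom_sum_eq hx.ne', le_div_iff₀ hx1]
  rw [div_mul_eq_mul_div, div_mul_cancel₀ _ hx1.ne']
  nlinarith [pow_pos (zero_lt_one.trans hx) k]

lemma norm_tsum_le_of_low_high {G : Type*} [SeminormedAddCommGroup G] {c : ℕ → G} {ρ K : ℝ}
    (hρ4 : 1 < 4 * ρ) (hρ1 : ρ < 1) (k : ℕ) (hhigh : ∀ q, ‖c q‖ ≤ ρ ^ (q + 1) * K)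
    (hlow : ∀ q < k, ‖c q‖ ≤ (4 * ρ) ^ (q + 1) / 4 ^ (k + 1) * K) :
    ‖∑' q, c q‖ ≤ ρ ^ (k + 1) * ((4 * ρ - 1)⁻¹ + (1 - ρ)⁻¹) * K := by
  have hρ0 : 0 < ρ := by linarith
  have hK : 0 ≤ K := by
    have := (norm_nonneg _).trans (hhigh 0)
    rwa [zero_add, pow_one, mul_nonneg_iff_of_pos_left hρ0] at this
  have hsum : Summable fun q => ‖c q‖ := Summable.of_nonneg_of_le (fun _ => norm_nonneg _) hhigh
    (summable_pow_succ_mul hρ0.le hρ1 K)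
  have hlow_sum : ∑ q ∈ Finset.range k, (4 * ρ) ^ (q + 1) / 4 ^ (k + 1) * K
      ≤ ρ ^ (k + 1) * (4 * ρ - 1)⁻¹ * K := by
    rw [← Finset.sum_mul, ← Finset.sum_div]
    refine mul_le_mul_of_nonneg_right ?_ hK
    calc _ ≤ (4 * ρ) ^ (k + 1) / (4 * ρ - 1) / 4 ^ (k + 1) := by
          gcongr; exact sum_range_pow_succ_le hρ4 k
      _ = _ := by rw [mul_pow]; field_simp
  have hhigh_sum : ∑' q, ρ ^ (q + k + 1) * K = ρ ^ (k + 1) * (1 - ρ)⁻¹ * K := by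
    have : (fun q => ρ ^ (q + k + 1) * K) = fun q => ρ ^ q * (ρ ^ (k + 1) * K) := by
      ext q; ring
    rw [this, tsum_mul_right, tsum_geometric_of_lt_one hρ0.le hρ1]; ring
  calc ‖∑' q, c q‖ ≤ ∑' q, ‖c q‖ := norm_tsum_le_tsum_norm hsum
    _ = ∑ q ∈ Finset.range k, ‖c q‖ + ∑' q, ‖c (q + k)‖ := (hsum.sum_add_tsum_nat_add k).symm
    _ ≤ ∑ q ∈ Finset.range k, (4 * ρ) ^ (q + 1) / 4 ^ (k + 1) * K + ∑' q, ρ ^ (q + k + 1) * K :=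
        add_le_add (Finset.sum_le_sum fun q hq => hlow q (Finset.mem_range.1 hq))
          (((summable_nat_add_iff k).2 hsum).tsum_le_tsum (fun q => hhigh (q + k))
            ((summable_nat_add_iff k).2 (summable_pow_succ_mul hρ0.le hρ1 K)))
    _ ≤ _ := by rw [hhigh_sum]; linarith

end GeometricSums

section CoeffDecay

variable {E : Type*} [NormedAddCommGroup E]

/-- `CoeffBound γ f K` without its condition on `f 0`, written with the rate `r = 2 ^ (-γ)` so
that the estimates only involve natural powers. -/
def CoeffDecay (r : ℝ) (f : ℝ → E) (K : ℝ) : Prop :=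
  ∀ p m : ℕ, m ≤ 2 ^ p → ‖coeff f p m‖ ≤ r ^ p * K

lemma CoeffDecay.nonneg {r K : ℝ} {f : ℝ → E} (h : CoeffDecay r f K) : 0 ≤ K := by
  simpa using (norm_nonneg _).trans (h 0 0 (Nat.zero_le _))

lemma two_rpow_mul_mul_pow_two_rpow_neg (γ : ℝ) (p : ℕ) :
    (2:ℝ) ^ (γ * p) * ((2:ℝ) ^ (-γ)) ^ p = 1 := by
  rw [← Real.rpow_natCast, ← Real.rpow_mul zero_le_two, ← Real.rpow_add two_pos]
  simp

lemma CoeffBound.coeffDecay {γ K : ℝ} {f : ℝ → E} (h : CoeffBound γ f K) :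
    CoeffDecay (2 ^ (-γ)) f K := fun p m hm =>
  calc ‖coeff f p m‖ = ((2:ℝ) ^ (-γ)) ^ p * (2 ^ (γ * p) * ‖coeff f p m‖) := by
        rw [← mul_assoc, mul_comm _ ((2:ℝ) ^ (γ * p)), two_rpow_mul_mul_pow_two_rpow_neg, one_mul]
    _ ≤ _ := mul_le_mul_of_nonneg_left (h.2 p m hm) (by positivity)

lemma coeffBound_of_coeffDecay {γ K : ℝ} {f : ℝ → E} (h0 : (2:ℝ) ^ (-γ) * ‖f 0‖ ≤ K)
    (h : CoeffDecay (2 ^ (-γ)) f K) : CoeffBound γ f K :=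
  ⟨h0, fun p m hm => calc
    (2:ℝ) ^ (γ * p) * ‖coeff f p m‖ ≤ 2 ^ (γ * p) * ((2 ^ (-γ)) ^ p * K) :=
        mul_le_mul_of_nonneg_left (h p m hm) (by positivity)
    _ = K := by rw [← mul_assoc, two_rpow_mul_mul_pow_two_rpow_neg, one_mul]⟩

end CoeffDecay

section SymmetricPart

variable {E F : Type*} [NormedAddCommGroup E] [NormedSpace ℝ E]
  [NormedAddCommGroup F] [NormedSpace ℝ F]

def symPartHead (v : ℝ → E →L[ℝ] F) (w : ℝ → E) : ℝ → F := fun t =>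
  ∑ m ∈ Finset.range 2, ∑ n ∈ Finset.range 2,
    (∫ s in (0:ℝ)..t, phi 0 m s * chi 0 n s) • ((coeff v 0 m) (coeff w 0 n))

def symPartTail (v : ℝ → E →L[ℝ] F) (w : ℝ → E) : ℝ → F := fun t =>
  ∑' q : ℕ, (block v (q + 2) t) (block w (q + 2) t)

lemma symPart_eq (v : ℝ → E →L[ℝ] F) (w : ℝ → E) :
    symPart v w = fun t => symPartHead v w t + (1 / 2 : ℝ) • symPartTail v w t := rfl

lemma symPart_zero (v : ℝ → E →L[ℝ] F) (w : ℝ → E) : symPart v w 0 = 0 := by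
  simp [symPart_eq, symPartHead, symPartTail, block_succ_zero]

lemma abs_primitive_phi_zero_mul_chi_zero_le (i j : ℕ) {t : ℝ} (ht : t ∈ Icc (0:ℝ) 1) :
    |∫ s in (0:ℝ)..t, phi 0 i s * chi 0 j s| ≤ 1 := by
  rw [← Real.norm_eq_abs]
  refine (intervalIntegral.norm_integral_le_of_norm_le_const (C := 1) fun s hs => ?_).trans ?_
  · rw [uIoc_of_le ht.1] at hs
    have hphi := abs_phi_sub_le 0 i 0 s
    rw [phi_zero, sub_zero, sub_zero, pow_zero, one_mul, abs_of_pos hs.1] at hphi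
    have hchi := abs_chi_le 0 j s
    rw [pow_zero] at hchi
    rw [Real.norm_eq_abs, abs_mul]
    exact mul_le_one₀ (hphi.trans (hs.2.trans ht.2)) (abs_nonneg _) hchi
  · rw [sub_zero, abs_of_nonneg ht.1, one_mul]; exact ht.2

variable {r s Kv Kw : ℝ} {v : ℝ → E →L[ℝ] F} {w : ℝ → E}

lemma norm_coeff_zero_apply_le (hv : CoeffDecay r v Kv) (hw : CoeffDecay s w Kw) {i j : ℕ}
    (hi : i ≤ 1) (hj : j ≤ 1) : ‖coeff v 0 i (coeff w 0 j)‖ ≤ Kv * Kw :=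
  calc _ ≤ ‖coeff v 0 i‖ * ‖coeff w 0 j‖ := (coeff v 0 i).le_opNorm _
    _ ≤ Kv * Kw := mul_le_mul (by simpa using hv 0 i (by simpa)) (by simpa using hw 0 j (by simpa))
        (norm_nonneg _) hv.nonneg

lemma norm_symPartHead_le (hv : CoeffDecay r v Kv) (hw : CoeffDecay s w Kw) {t : ℝ}
    (ht : t ∈ Icc (0:ℝ) 1) : ‖symPartHead v w t‖ ≤ 4 * (Kv * Kw) :=
  calc _ ≤ ∑ _i ∈ Finset.range 2, ∑ _j ∈ Finset.range 2, (1 * (Kv * Kw)) := by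
        refine (norm_sum_le _ _).trans (Finset.sum_le_sum fun i hi => (norm_sum_le _ _).trans
          (Finset.sum_le_sum fun j hj => ?_))
        rw [norm_smul, Real.norm_eq_abs]
        exact mul_le_mul (abs_primitive_phi_zero_mul_chi_zero_le i j ht)
          (norm_coeff_zero_apply_le hv hw (by simpa [Nat.lt_succ_iff] using hi)
            (by simpa [Nat.lt_succ_iff] using hj)) (norm_nonneg _) zero_le_one
    _ = 4 * (Kv * Kw) := by simp; ring

lemma norm_coeff_symPartHead_le (hv : CoeffDecay r v Kv) (hw : CoeffDecay s w Kw) {p m : ℕ}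
    (hp : 1 ≤ p) (hm : m ≠ 0) : ‖coeff (symPartHead v w) p m‖ ≤ (1 / 4) ^ p * (Kv * Kw) := by
  unfold symPartHead
  simp only [coeff_sum, coeff_smul_const]
  calc _ ≤ ∑ _i ∈ Finset.range 2, ∑ _j ∈ Finset.range 2, ((1 / 2 ^ (p + 1)) ^ 2 * (Kv * Kw)) := by
        refine (norm_sum_le _ _).trans (Finset.sum_le_sum fun i hi => (norm_sum_le _ _).trans
          (Finset.sum_le_sum fun j hj => ?_))
        rw [norm_smul, Real.norm_eq_abs]
        refine mul_le_mul ?_ (norm_coeff_zero_apply_le hv hw (by simpa [Nat.lt_succ_iff] using hi)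
            (by simpa [Nat.lt_succ_iff] using hj)) (norm_nonneg _) (by positivity)
        simpa using abs_coeff_primitive_phi_mul_chi_le (q := 0) (i := i) (j := j) hp hm
    _ = (1 / 4) ^ p * (Kv * Kw) := by
        simp only [Finset.sum_const, Finset.card_range, nsmul_eq_mul]
        rw [div_pow, one_pow, ← pow_mul, show (1 / 4 : ℝ) = 1 / 2 ^ 2 by norm_num, div_pow, one_pow,
          ← pow_mul]
        field_simp; ring

lemma norm_block_apply_block_le (hv : CoeffDecay r v Kv) (hw : CoeffDecay s w Kw) (q : ℕ)
    (t : ℝ) : ‖block v (q + 2) t (block w (q + 2) t)‖ ≤ (r * s) ^ (q + 1) * (Kv * Kw / 4) := by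
  have h1 := norm_block_le (fun n hn => hv (q + 1) n hn) t
  have h2 := norm_block_le (fun n hn => hw (q + 1) n hn) t
  calc _ ≤ ‖block v (q + 2) t‖ * ‖block w (q + 2) t‖ := (block v (q + 2) t).le_opNorm _
    _ ≤ r ^ (q + 1) * Kv / 2 * (s ^ (q + 1) * Kw / 2) :=
        mul_le_mul h1 h2 (norm_nonneg _) ((norm_nonneg _).trans h1)
    _ = _ := by ring

lemma norm_coeff_block_apply_block_le (hv : CoeffDecay r v Kv) (hw : CoeffDecay s w Kw) (q : ℕ)
    {p m : ℕ} (hmp : m ≤ 2 ^ p) :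
    ‖coeff (fun t => block v (q + 2) t (block w (q + 2) t)) p m‖ ≤ (r * s) ^ (q + 1) * (Kv * Kw) :=
  (norm_coeff_le_of_norm_le (fun t _ => norm_block_apply_block_le hv hw q t) hmp).trans_eq
    (by ring)

/-- Blocks of generation `q + 1 < p` are affine on the cells of generation `p`, so the second
difference of their product only sees the product of their increments. -/
lemma norm_coeff_block_apply_block_le_of_lt (hv : CoeffDecay r v Kv) (hw : CoeffDecay s w Kw)
    {q p m : ℕ} (hqp : q + 2 ≤ p) (hm : m ≠ 0) :
    ‖coeff (fun t => block v (q + 2) t (block w (q + 2) t)) p m‖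
      ≤ (4 * (r * s)) ^ (q + 1) / 4 ^ p * (Kv * Kw) := by
  rw [coeff_apply_of_midpoint hm (block_pt1 v (by omega) m) (block_pt1 w (by omega) m), norm_smul,
    norm_neg, norm_inv, Real.norm_two]
  have h1 := norm_block_pt2_sub_block_pt0_le hqp (fun n hn => hv (q + 1) n hn) m
  have h2 := norm_block_pt2_sub_block_pt0_le hqp (fun n hn => hw (q + 1) n hn) m
  have hprod := (ContinuousLinearMap.le_opNorm _ _).trans
    (mul_le_mul h1 h2 (norm_nonneg _) ((norm_nonneg _).trans h1))
  have hX : 2 ^ (q + 1) / 2 ^ p * (r ^ (q + 1) * Kv) * (2 ^ (q + 1) / 2 ^ p * (s ^ (q + 1) * Kw))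
      = (4 * (r * s)) ^ (q + 1) / 4 ^ p * (Kv * Kw) := by
    rw [show (4:ℝ) = 2 * 2 by norm_num, mul_pow, mul_pow, mul_pow, mul_pow]; field_simp
  rw [hX] at hprod
  linarith [(norm_nonneg _).trans hprod]

lemma norm_symPartTail_le (hv : CoeffDecay r v Kv) (hw : CoeffDecay s w Kw)
    (hρ0 : 0 ≤ r * s) (hρ1 : r * s < 1) (t : ℝ) :
    ‖symPartTail v w t‖ ≤ (1 - r * s)⁻¹ * (Kv * Kw / 4) := by
  have hK : 0 ≤ Kv * Kw / 4 := by have := hv.nonneg; have := hw.nonneg; positivity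
  exact tsum_of_norm_bounded ((hasSum_geometric_of_lt_one hρ0 hρ1).mul_right _) fun q =>
    (norm_block_apply_block_le hv hw q t).trans
      (mul_le_mul_of_nonneg_right (pow_le_pow_of_le_one hρ0 hρ1.le (Nat.le_succ q)) hK)

lemma norm_symPart_le (hv : CoeffDecay r v Kv) (hw : CoeffDecay s w Kw)
    (hρ0 : 0 ≤ r * s) (hρ1 : r * s < 1) {t : ℝ} (ht : t ∈ Icc (0:ℝ) 1) :
    ‖symPart v w t‖ ≤ (4 + (1 - r * s)⁻¹) * (Kv * Kw) := by
  have hK : 0 ≤ (1 - r * s)⁻¹ * (Kv * Kw) :=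
    mul_nonneg (inv_nonneg.2 (by linarith)) (mul_nonneg hv.nonneg hw.nonneg)
  have hhead := norm_symPartHead_le hv hw ht
  have htail := norm_symPartTail_le hv hw hρ0 hρ1 t
  rw [symPart_eq]
  refine (norm_add_le _ _).trans ?_
  rw [norm_smul, Real.norm_of_nonneg (by norm_num)]
  nlinarith

variable [CompleteSpace F]

lemma summable_block_apply_block (hv : CoeffDecay r v Kv) (hw : CoeffDecay s w Kw)
    (hρ0 : 0 ≤ r * s) (hρ1 : r * s < 1) (t : ℝ) :
    Summable fun q => block v (q + 2) t (block w (q + 2) t) :=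
  (summable_pow_succ_mul hρ0 hρ1 _).of_norm_bounded fun q => norm_block_apply_block_le hv hw q t

lemma continuous_symPart (hv : CoeffDecay r v Kv) (hw : CoeffDecay s w Kw)
    (hρ0 : 0 ≤ r * s) (hρ1 : r * s < 1) : Continuous (symPart v w) := by
  rw [symPart_eq]
  refine .add (continuous_finsetSum _ fun i _ => continuous_finsetSum _ fun j _ =>
    (continuous_primitive (intervalIntegrable_phi_mul_chi 0 i 0 j) 0).smul continuous_const)
    (continuous_const.smul ?_)
  exact continuous_tsum (fun q => (continuous_block v _).clm_apply (continuous_block w _))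
    (summable_pow_succ_mul hρ0 hρ1 _) fun q t => norm_block_apply_block_le hv hw q t

lemma norm_coeff_symPartTail_le (hv : CoeffDecay r v Kv) (hw : CoeffDecay s w Kw)
    (hρ4 : 1 < 4 * (r * s)) (hρ1 : r * s < 1) {k m : ℕ} (hm : m ≠ 0) (hmp : m ≤ 2 ^ (k + 1)) :
    ‖coeff (symPartTail v w) (k + 1) m‖
      ≤ (r * s) ^ (k + 1) * ((4 * (r * s) - 1)⁻¹ + (1 - r * s)⁻¹) * (Kv * Kw) := by
  unfold symPartTail
  rw [coeff_tsum (summable_block_apply_block hv hw (by linarith) hρ1)]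
  exact norm_tsum_le_of_low_high hρ4 hρ1 k
    (fun q => norm_coeff_block_apply_block_le hv hw q hmp)
    fun q hq => (norm_coeff_block_apply_block_le_of_lt hv hw (by omega) hm).trans_eq (by ring)

end SymmetricPart

section SymmetricPartBound

variable {E F : Type*} [NormedAddCommGroup E] [NormedSpace ℝ E]
  [NormedAddCommGroup F] [NormedSpace ℝ F] [CompleteSpace F]
  {r s Kv Kw : ℝ} {v : ℝ → E →L[ℝ] F} {w : ℝ → E}

-- `4 (4 + (1 - ρ)⁻¹)` bounds the coefficients of generation `0` through the sup norm, and
-- `1 + ((4ρ - 1)⁻¹ + (1 - ρ)⁻¹) / 2` those of the later generations.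
def symPartConst (ρ : ℝ) : ℝ := 16 + 4 * (1 - ρ)⁻¹ + (4 * ρ - 1)⁻¹

lemma symPartConst_pos {ρ : ℝ} (hρ4 : 1 < 4 * ρ) (hρ1 : ρ < 1) : 0 < symPartConst ρ := by
  have := inv_pos.2 (sub_pos.2 hρ1); have := inv_pos.2 (sub_pos.2 hρ4)
  unfold symPartConst; positivity

lemma coeffDecay_symPart (hv : CoeffDecay r v Kv) (hw : CoeffDecay s w Kw)
    (hρ4 : 1 < 4 * (r * s)) (hρ1 : r * s < 1) :
    CoeffDecay (r * s) (symPart v w) (symPartConst (r * s) * (Kv * Kw)) := by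
  intro p m hmp
  have hρ0 : 0 < r * s := by linarith
  have hK : 0 ≤ Kv * Kw := mul_nonneg hv.nonneg hw.nonneg
  have ha : 0 < (4 * (r * s) - 1)⁻¹ := inv_pos.2 (by linarith)
  have hb : 0 < (1 - r * s)⁻¹ := inv_pos.2 (by linarith)
  rcases p with _ | k
  · refine (norm_coeff_le_of_norm_le (fun t ht => norm_symPart_le hv hw hρ0.le hρ1 ht)
      hmp).trans ?_
    rw [pow_zero, one_mul, symPartConst]
    nlinarith
  rcases eq_or_ne m 0 with rfl | hm
  · simp only [coeff, if_true, Nat.add_one_ne_zero, if_false, norm_zero]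
    exact mul_nonneg (pow_nonneg hρ0.le _) (mul_nonneg (symPartConst_pos hρ4 hρ1).le hK)
  have hρk : 0 ≤ (r * s) ^ (k + 1) * (Kv * Kw) := mul_nonneg (pow_nonneg hρ0.le _) hK
  have hquarter : (1 / 4 : ℝ) ^ (k + 1) ≤ (r * s) ^ (k + 1) :=
    pow_le_pow_left₀ (by norm_num) (by linarith) (k + 1)
  have hhead := (norm_coeff_symPartHead_le hv hw (Nat.le_add_left 1 k) hm).trans
    (mul_le_mul_of_nonneg_right hquarter hK)
  have htail := norm_coeff_symPartTail_le hv hw hρ4 hρ1 hm hmp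
  rw [symPart_eq, coeff_add_smul]
  refine (norm_add_le _ _).trans ?_
  rw [norm_smul, Real.norm_of_nonneg (by norm_num), symPartConst]
  nlinarith [mul_nonneg ha.le hρk, mul_nonneg hb.le hρk]

end SymmetricPartBound

end Sch

open Sch in
/-- For any `α, β ∈ (0,1)` (no restriction on `α + β`), the symmetric part
`S(v,w) = ∑_{m,n≤1} v_{0m}w_{0n}∫φ_{0m}dφ_{0n} + (1/2)∑_{p≥1} Δ_p v Δ_p w` is a bounded
bilinear operator from `C^α × C^β` to `C^{α+β}`: `‖S(v,w)‖_{α+β} ≲ ‖v‖_α ‖w‖_β`. -/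
theorem symmetric_part_bound (α β : ℝ) (hα0 : 0 < α) (hα1 : α < 1) (hβ0 : 0 < β) (hβ1 : β < 1) :
    ∃ C > (0:ℝ), ∀ (d n : ℕ)
      (v : ℝ → (EuclideanSpace ℝ (Fin d) →L[ℝ] EuclideanSpace ℝ (Fin n)))
      (w : ℝ → EuclideanSpace ℝ (Fin d)) (Kv Kw : ℝ),
      ContinuousOn v (Icc 0 1) → ContinuousOn w (Icc 0 1) →
      CoeffBound α v Kv → CoeffBound β w Kw →
      (∀ t ∈ Icc (0:ℝ) 1,
        Summable fun p : ℕ => (block v (p + 2) t) (block w (p + 2) t)) ∧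
      ContinuousOn (symPart v w) (Icc 0 1) ∧
      CoeffBound (α + β) (symPart v w) (C * Kv * Kw) := by
  set ρ : ℝ := 2 ^ (-α) * 2 ^ (-β)
  have hρ : (2:ℝ) ^ (-(α + β)) = ρ := by rw [neg_add, Real.rpow_add two_pos]
  have hρ0 : 0 ≤ ρ := by positivity
  have hρ1 : ρ < 1 := hρ ▸ Real.rpow_lt_one_of_one_lt_of_neg one_lt_two (by linarith)
  have hρ4 : 1 < 4 * ρ := by
    rw [← hρ, show (4:ℝ) = 2 ^ (2:ℝ) by norm_num, ← Real.rpow_add two_pos]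
    exact Real.one_lt_rpow one_lt_two (by linarith)
  refine ⟨symPartConst ρ, symPartConst_pos hρ4 hρ1, fun d n v w Kv Kw _ _ hv hw => ?_⟩
  have hv' := hv.coeffDecay
  have hw' := hw.coeffDecay
  refine ⟨fun t _ => summable_block_apply_block hv' hw' hρ0 hρ1 t,
    (continuous_symPart hv' hw' hρ0 hρ1).continuousOn, coeffBound_of_coeffDecay ?_ ?_⟩
  · rw [symPart_zero, norm_zero, mul_zero, mul_assoc]
    exact mul_nonneg (symPartConst_pos hρ4 hρ1).le (mul_nonneg hv'.nonneg hw'.nonneg)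
  · rw [hρ, mul_assoc]; exact coeffDecay_symPart hv' hw' hρ4 hρ1
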